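/- Suppose l^{(1)},…,l^{(t)} ∈ ℱ(𝒩) generate the flux cone ℱ(𝒩), and let r = dim S. If there exist p ∈ ℝ_{>0}^s and λ ∈ ℝ_{≥0}^t such that the vector α := Σ_{i=1}^t λ_i l^{(i)} has all coordinates strictly positive and Σ_{I ⊆ {1,…,s}, |I| = r} det(J(p,λ)[I,I]) ≠ 0, then there exist rate constants κ ∈ ℝ_{>0}^m and a positive steady state x ∈ ℝ_{>0}^s for κ that is nondegenerate; that is, the network is nondegenerate. -/

import Mathlib

open Matrix BigOperators

/-- Mass-action rate vector: `v j (κ, x) = κ_j ∏_i x_i ^ μ_{ij}`. -/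
noncomputable def vRate {s m : ℕ} (μ : Fin s → Fin m → ℕ) (κ : Fin m → ℝ)
    (x : Fin s → ℝ) : Fin m → ℝ :=
  fun j => κ j * ∏ i, x i ^ μ i j

/-- Mass-action species-formation rate function `f(κ, x) = 𝒩 v(κ, x)`. -/
noncomputable def fRate {s m : ℕ} (N : Matrix (Fin s) (Fin m) ℝ)
    (μ : Fin s → Fin m → ℕ) (κ : Fin m → ℝ) (x : Fin s → ℝ) : Fin s → ℝ :=
  N.mulVec (vRate μ κ x)

/-- Jacobian matrix of `f(κ, ·)` at `x`. -/
noncomputable def jacF {s m : ℕ} (N : Matrix (Fin s) (Fin m) ℝ)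
    (μ : Fin s → Fin m → ℕ) (κ : Fin m → ℝ) (x : Fin s → ℝ) :
    Matrix (Fin s) (Fin s) ℝ :=
  Matrix.of fun i j =>
    fderiv ℝ (fun y : Fin s → ℝ => fRate N μ κ y i) x (Pi.single j 1)

/-- The flux cone `ℱ(𝒩) = {α ∈ ℝ_{≥0}^m : 𝒩 α = 0}`. -/
def fluxCone {s m : ℕ} (N : Matrix (Fin s) (Fin m) ℝ) : Set (Fin m → ℝ) :=
  {α | (∀ j, 0 ≤ α j) ∧ N.mulVec α = 0}

/-- The sum of all principal `r × r` minors of a square matrix `M`. -/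
noncomputable def pminorSum {s : ℕ} (r : ℕ) (M : Matrix (Fin s) (Fin s) ℝ) : ℝ :=
  ∑ I ∈ Finset.powersetCard r (Finset.univ : Finset (Fin s)),
    Matrix.det (M.submatrix (Subtype.val : {a // a ∈ I} → Fin s)
      (Subtype.val : {a // a ∈ I} → Fin s))

open Polynomial in
lemma det_one_add_X_smul_expand {s : ℕ} (M : Matrix (Fin s) (Fin s) ℝ) :
    (1 + (X : ℝ[X]) • M.map Polynomial.C).det
      = ∑ I ∈ (Finset.univ : Finset (Fin s)).powerset,
          (X : ℝ[X]) ^ I.card *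
            Polynomial.C (Matrix.det (M.submatrix (Subtype.val : {a // a ∈ I} → Fin s)
              (Subtype.val : {a // a ∈ I} → Fin s))) := by
  classical
  set R := ℝ[X]
  set M' : Matrix (Fin s) (Fin s) R := M.map Polynomial.C with hM'
  have h1 : (1 + (X : R) • M') = ((X : R) • M') + 1 := add_comm _ _
  have hdet : (1 + (X : R) • M').det
      = (Matrix.detRowAlternating : _).toMultilinearMap (((X : R) • M') + (1 : Matrix (Fin s) (Fin s) R)) := by
    rw [h1]; rfl
  rw [hdet]; refine (MultilinearMap.map_add_univ _ ((X : R) • M') (1 : Matrix (Fin s) (Fin s) R)).trans ?_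
  rw [← Finset.powerset_univ]
  apply Finset.sum_congr rfl
  intro I _
  have hpw : (I.piecewise ((X : R) • M') (1 : Matrix (Fin s) (Fin s) R))
      = Matrix.of (fun i j => (if i ∈ I then (X : R) else 1) *
          (Matrix.of (fun i j => if i ∈ I then M' i j else (1 : Matrix (Fin s) (Fin s) R) i j)) i j) := by
    funext i j
    by_cases h : i ∈ I <;> simp [Finset.piecewise, h, Matrix.smul_apply, smul_eq_mul]
  have hh : (Matrix.detRowAlternating : _).toMultilinearMap
      (I.piecewise ((X : R) • M') (1 : Matrix (Fin s) (Fin s) R))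
      = (Matrix.of (fun i j => (if i ∈ I then (X : R) else 1) *
          (Matrix.of (fun i j => if i ∈ I then M' i j else (1 : Matrix (Fin s) (Fin s) R) i j)) i j)).det := by
    rw [hpw]; rfl
  rw [hh, Matrix.det_mul_column]
  have hprod : (∏ i, (if i ∈ I then (X : R) else 1)) = (X : R) ^ I.card := by
    rw [Finset.prod_ite_mem, Finset.univ_inter, Finset.prod_const]
  rw [hprod]
  congr 1
  set Q : Matrix (Fin s) (Fin s) R :=
    Matrix.of (fun i j => if i ∈ I then M' i j else (1 : Matrix (Fin s) (Fin s) R) i j) with hQ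
  let e : {i : Fin s // i ∈ I} ⊕ {i : Fin s // ¬ i ∈ I} ≃ Fin s := Equiv.sumCompl (fun i : Fin s => i ∈ I)
  have hsub : Q.submatrix e e = Matrix.fromBlocks
      (M'.submatrix (Subtype.val : {a // a ∈ I} → Fin s) Subtype.val)
      (M'.submatrix (Subtype.val : {a // a ∈ I} → Fin s) (Subtype.val : {a // ¬ a ∈ I} → Fin s))
      0 1 := by
    ext i j
    cases i with
    | inl i =>
      cases j with
      | inl j => simp [e, Q, i.2]
      | inr j => simp [e, Q, i.2]
    | inr i =>
      cases j with
      | inl j =>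
        have : (i : Fin s) ≠ (j : Fin s) := by
          intro h; exact i.2 (h ▸ j.2)
        simp [e, Q, i.2, Matrix.one_apply, this]
      | inr j =>
        by_cases h : i = j
        · subst h; simp [e, Q, i.2, Matrix.one_apply]
        · have : (i : Fin s) ≠ (j : Fin s) := fun hh => h (Subtype.ext hh)
          simp [e, Q, i.2, Matrix.one_apply, this, h]
  have : Q.det = (Q.submatrix e e).det := (Matrix.det_submatrix_equiv_self e Q).symm
  rw [this, hsub, Matrix.det_fromBlocks_zero₂₁, Matrix.det_one, mul_one]
  rw [hM', Matrix.submatrix_map, RingHom.map_det]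
  rfl

open Polynomial in
lemma pminorSum_eq_coeff {s : ℕ} (r : ℕ) (M : Matrix (Fin s) (Fin s) ℝ) :
    pminorSum r M = ((1 + (X : ℝ[X]) • M.map Polynomial.C).det).coeff r := by
  classical
  rw [det_one_add_X_smul_expand, Polynomial.finset_sum_coeff]
  have : ∀ I ∈ (Finset.univ : Finset (Fin s)).powerset,
      ((X : ℝ[X]) ^ I.card * Polynomial.C
        (Matrix.det (M.submatrix (Subtype.val : {a // a ∈ I} → Fin s) Subtype.val))).coeff r
      = if I.card = r then
          Matrix.det (M.submatrix (Subtype.val : {a // a ∈ I} → Fin s) Subtype.val) else 0 := by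
    intro I _
    rw [mul_comm, Polynomial.coeff_C_mul, Polynomial.coeff_X_pow]
    by_cases h : I.card = r
    · simp [h]
    · rw [if_neg (fun hh => h hh.symm), if_neg h, mul_zero]
  rw [Finset.sum_congr rfl this, Finset.sum_ite, Finset.sum_const, smul_zero, add_zero]
  unfold pminorSum
  congr 1
  rw [Finset.powersetCard_eq_filter]

open Polynomial in
lemma pminorSum_mul {s r : ℕ} (U : Matrix (Fin s) (Fin r) ℝ) (V : Matrix (Fin r) (Fin s) ℝ) :
    pminorSum r (U * V) = (V * U).det := by
  classical
  rw [pminorSum_eq_coeff]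
  have h1 : ((U * V).map Polynomial.C : Matrix (Fin s) (Fin s) ℝ[X])
      = U.map Polynomial.C * V.map Polynomial.C := by
    exact Matrix.map_mul
  have key : (1 + (X : ℝ[X]) • (U * V).map Polynomial.C).det
      = (1 + (X : ℝ[X]) • (V * U).map Polynomial.C).det := by
    rw [h1, ← Matrix.smul_mul, Matrix.det_one_add_mul_comm, Matrix.mul_smul, ← Matrix.map_mul]
  rw [key, ← pminorSum_eq_coeff]
  unfold pminorSum
  have hpc : Finset.powersetCard r (Finset.univ : Finset (Fin r)) = {Finset.univ} := by
    ext I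
    rw [Finset.mem_powersetCard_univ, Finset.mem_singleton]
    have := Finset.card_eq_iff_eq_univ I
    rw [Fintype.card_fin] at this
    exact this
  rw [hpc, Finset.sum_singleton]
  let e : {a : Fin r // a ∈ (Finset.univ : Finset (Fin r))} ≃ Fin r :=
    Equiv.subtypeUnivEquiv (fun x => Finset.mem_univ x)
  have : (Subtype.val : {a : Fin r // a ∈ (Finset.univ : Finset (Fin r))} → Fin r) = ⇑e := rfl
  rw [this]
  exact Matrix.det_submatrix_equiv_self e (V * U)

lemma restrict_surjective_of_pminorSum_ne_zero {s r : ℕ} (A : Matrix (Fin s) (Fin s) ℝ)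
    (S : Submodule ℝ (Fin s → ℝ)) (hr : Module.finrank ℝ S = r)
    (hcol : ∀ k, (fun i => A i k) ∈ S)
    (hdet : pminorSum r A ≠ 0)
    (hmap : ∀ u ∈ S, A.mulVecLin u ∈ S) :
    Function.Surjective (A.mulVecLin.restrict hmap) := by
  classical
  have : FiniteDimensional ℝ S := inferInstance
  let b : Module.Basis (Fin r) ℝ S := (Module.finBasis ℝ S).reindex (finCongr hr)
  let U : Matrix (Fin s) (Fin r) ℝ := Matrix.of fun i k => ((b k : Fin s → ℝ)) i
  let V : Matrix (Fin r) (Fin s) ℝ := Matrix.of fun q k => b.repr ⟨fun i => A i k, hcol k⟩ q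
  -- A = U * V
  have hA : A = U * V := by
    ext i k
    rw [Matrix.mul_apply]
    have h := b.sum_repr ⟨fun i => A i k, hcol k⟩
    have h2 := congrArg (fun z : S => (z : Fin s → ℝ) i) h
    simp only [Submodule.coe_sum, Finset.sum_apply, SetLike.val_smul, Pi.smul_apply,
      smul_eq_mul] at h2
    rw [← h2]
    apply Finset.sum_congr rfl
    intro q _
    simp [U, V, mul_comm]
  -- U.mulVec identifies coordinates with S
  have hUmem : ∀ w : Fin r → ℝ, U.mulVec w = ((∑ q, w q • b q : S) : Fin s → ℝ) := by
    intro w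
    funext i
    simp only [Matrix.mulVec, dotProduct, Submodule.coe_sum, Finset.sum_apply,
      SetLike.val_smul, Pi.smul_apply, smul_eq_mul]
    apply Finset.sum_congr rfl
    intro q _
    simp [U, mul_comm]
  have hUinj : Function.Injective U.mulVec := by
    intro w w' h
    have : ((∑ q, w q • b q : S) : Fin s → ℝ) = ((∑ q, w' q • b q : S) : Fin s → ℝ) := by
      rw [← hUmem, ← hUmem, h]
    have h2 : (∑ q, w q • b q : S) = ∑ q, w' q • b q := Subtype.ext this
    have h3 := congrArg (b.repr ·) h2
    simp only [map_sum, _root_.map_smul, Module.Basis.repr_self] at h3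
    funext q
    have := congrArg (fun f => f q) h3
    simpa [Finsupp.single_apply] using this
  -- det (V * U) ≠ 0
  have hVU : (V * U).det ≠ 0 := by
    rw [← pminorSum_mul, ← hA]; exact hdet
  -- injective restriction
  have hinj : Function.Injective (A.mulVecLin.restrict hmap) := by
    rw [injective_iff_map_eq_zero]
    intro z hz
    obtain ⟨u, hu⟩ := z
    have hz' : A.mulVec u = 0 := by
      have := congrArg (Subtype.val) hz
      simpa [LinearMap.restrict_apply] using this
    -- write u = U.mulVec w
    set w : Fin r → ℝ := fun q => b.repr ⟨u, hu⟩ q with hw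
    have huw : u = U.mulVec w := by
      rw [hUmem]
      have := b.sum_repr ⟨u, hu⟩
      exact congrArg Subtype.val this.symm
    have h0 : U.mulVec ((V * U).mulVec w) = 0 := by
      rw [Matrix.mulVec_mulVec, ← Matrix.mul_assoc, ← hA, ← Matrix.mulVec_mulVec, ← huw, hz']
    have h1 : (V * U).mulVec w = 0 := by
      apply hUinj
      rw [h0, Matrix.mulVec_zero]
    have hwz : w = 0 := by
      have hu' : IsUnit (V * U).det := isUnit_iff_ne_zero.mpr hVU
      have := congrArg (fun v => ((V * U)⁻¹).mulVec v) h1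
      simpa [Matrix.mulVec_mulVec, Matrix.nonsing_inv_mul _ hu'] using this
    have : u = 0 := by rw [huw, hwz, Matrix.mulVec_zero]
    exact Subtype.ext this
  exact LinearMap.surjective_of_injective hinj

lemma jacF_eq {s m : ℕ} (N : Matrix (Fin s) (Fin m) ℝ) (μ : Fin s → Fin m → ℕ)
    (κ : Fin m → ℝ) (x : Fin s → ℝ) :
    jacF N μ κ x = Matrix.of fun i k =>
      ∑ j, (N i j * κ j) *
        ((∏ q ∈ Finset.univ.erase k, x q ^ μ q j) * ((μ k j : ℝ) * x k ^ (μ k j - 1))) := by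
  classical
  funext i k
  have hg : ∀ j : Fin m, HasFDerivAt (fun y : Fin s → ℝ => ∏ q, y q ^ μ q j)
      (∑ q, (∏ q' ∈ Finset.univ.erase q, x q' ^ μ q' j) •
        (((μ q j : ℝ) * x q ^ (μ q j - 1)) • (ContinuousLinearMap.proj q : (Fin s → ℝ) →L[ℝ] ℝ))) x := by
    intro j
    have hfac : ∀ q : Fin s, HasFDerivAt (fun y : Fin s → ℝ => y q ^ μ q j)
        (((μ q j : ℝ) * x q ^ (μ q j - 1)) • (ContinuousLinearMap.proj q : (Fin s → ℝ) →L[ℝ] ℝ)) x :=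
      fun q => (hasDerivAt_pow (μ q j) (x q)).comp_hasFDerivAt x
        (ContinuousLinearMap.hasFDerivAt (ContinuousLinearMap.proj q : (Fin s → ℝ) →L[ℝ] ℝ))
    exact HasFDerivAt.finset_prod (fun q _ => hfac q)
  have hf : HasFDerivAt (fun y : Fin s → ℝ => fRate N μ κ y i)
      (∑ j, (N i j * κ j) • (∑ q, (∏ q' ∈ Finset.univ.erase q, x q' ^ μ q' j) •
        (((μ q j : ℝ) * x q ^ (μ q j - 1)) • (ContinuousLinearMap.proj q : (Fin s → ℝ) →L[ℝ] ℝ)))) x := by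
    have : (fun y : Fin s → ℝ => fRate N μ κ y i)
        = fun y => ∑ j, (N i j * κ j) * ∏ q, y q ^ μ q j := by
      funext y
      simp [fRate, vRate, Matrix.mulVec, dotProduct, mul_assoc]
    rw [this]
    exact HasFDerivAt.fun_sum fun j _ => ((hg j).const_mul (N i j * κ j))
  show fderiv ℝ (fun y : Fin s → ℝ => fRate N μ κ y i) x (Pi.single k 1) = _
  rw [hf.fderiv]
  simp only [ContinuousLinearMap.coe_sum', Finset.sum_apply, ContinuousLinearMap.coe_smul',
    Pi.smul_apply, ContinuousLinearMap.proj_apply, smul_eq_mul]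
  apply Finset.sum_congr rfl
  intro j _
  congr 1
  rw [Finset.sum_eq_single k]
  · simp
  · intro q _ hq
    simp [Pi.single_apply, hq]
  · simp


/-- if there are `p ∈ ℝ_{>0}^s` and `λ ∈ ℝ_{≥0}^t` such that
`α = Σᵢ λᵢ l⁽ⁱ⁾` is strictly positive and `B(p,λ) = Σ_{|I|=r} det J(p,λ)[I,I] ≠ 0`, then
the network has a nondegenerate positive steady state: there exist positive rate constants
`κ` and a positive steady state `x` for `κ` such that the endomorphism of the
stoichiometric subspace `S` induced by `Jac_f(κ,x)` is surjective. -/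
theorem network_nondegenerate_of_B_nonzero {s m t r : ℕ} (μ ν : Fin s → Fin m → ℕ)
    (hdiff : ∀ j, ∃ i, μ i j ≠ ν i j)
    (N : Matrix (Fin s) (Fin m) ℝ)
    (hN : ∀ i j, N i j = (ν i j : ℝ) - (μ i j : ℝ))
    (𝒳 : Matrix (Fin s) (Fin m) ℝ)
    (h𝒳 : ∀ i j, 𝒳 i j = (μ i j : ℝ))
    -- S is the stoichiometric subspace, of dimension r
    (S : Submodule ℝ (Fin s → ℝ))
    (hS : S = Submodule.span ℝ (Set.range Nᵀ))
    (hr : Module.finrank ℝ S = r)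
    -- the l⁽ⁱ⁾ generate the flux cone
    (l : Fin t → Fin m → ℝ)
    (hl : ∀ i, l i ∈ fluxCone N)
    (hgen : ∀ α ∈ fluxCone N, ∃ lam : Fin t → ℝ,
      (∀ i, 0 ≤ lam i) ∧ α = ∑ i, lam i • l i)
    (p : Fin s → ℝ) (hp : ∀ i, 0 < p i)
    (lam : Fin t → ℝ) (hlam : ∀ i, 0 ≤ lam i)
    (hαpos : ∀ j, 0 < ∑ i, lam i * l i j)
    (hB : pminorSum r
      (N * Matrix.diagonal (fun j => ∑ i, lam i * l i j) * 𝒳ᵀ *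
        Matrix.diagonal p) ≠ 0) :
    ∃ (κ : Fin m → ℝ) (x : Fin s → ℝ),
      (∀ j, 0 < κ j) ∧ (∀ i, 0 < x i) ∧ fRate N μ κ x = 0 ∧
      ∀ hmap : ∀ u ∈ S, (jacF N μ κ x).mulVecLin u ∈ S,
        Function.Surjective ((jacF N μ κ x).mulVecLin.restrict hmap) := by
  classical
  set α : Fin m → ℝ := fun j => ∑ i, lam i * l i j with hα
  set x : Fin s → ℝ := fun i => (p i)⁻¹ with hx
  set κ : Fin m → ℝ := fun j => α j * ∏ i, p i ^ μ i j with hκ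
  have hppos : ∀ i, p i ≠ 0 := fun i => ne_of_gt (hp i)
  have hPpos : ∀ j, 0 < ∏ i, p i ^ μ i j :=
    fun j => Finset.prod_pos fun i _ => pow_pos (hp i) _
  have hκpos : ∀ j, 0 < κ j := fun j => mul_pos (hαpos j) (hPpos j)
  have hxpos : ∀ i, 0 < x i := fun i => inv_pos.mpr (hp i)
  -- the rate vector equals α at our chosen point
  have hv : ∀ j, κ j * ∏ i, x i ^ μ i j = α j := by
    intro j
    have h1 : ∏ i, x i ^ μ i j = (∏ i, p i ^ μ i j)⁻¹ := by
      rw [← Finset.prod_inv_distrib]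
      exact Finset.prod_congr rfl fun i _ => by rw [hx, inv_pow]
    rw [h1, hκ]
    exact mul_inv_cancel_right₀ (ne_of_gt (hPpos j)) (α j)
  -- steady state
  have hsteady : fRate N μ κ x = 0 := by
    have hvR : vRate μ κ x = α := funext fun j => hv j
    have hαsum : α = ∑ i, lam i • l i := by
      funext j; simp [hα, Finset.sum_apply]
    rw [fRate, hvR, hαsum]
    have hsum : N.mulVec (∑ i, lam i • l i) = ∑ i, lam i • N.mulVec (l i) := by
      rw [← Matrix.mulVecLin_apply, map_sum]
      simp [Matrix.mulVecLin_apply]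
    rw [hsum]
    have : ∀ i : Fin t, lam i • N.mulVec (l i) = 0 := by
      intro i; rw [(hl i).2, smul_zero]
    simp [this]
  set J := N * Matrix.diagonal α * 𝒳ᵀ * Matrix.diagonal p with hJ
  -- the key term-by-term identity
  have hterm : ∀ (j : Fin m) (k : Fin s),
      (κ j) * ((∏ q ∈ Finset.univ.erase k, x q ^ μ q j) *
        ((μ k j : ℝ) * x k ^ (μ k j - 1))) = α j * ((μ k j : ℝ) * p k) := by
    intro j k
    have hsplit : (∏ q, x q ^ μ q j)
        = x k ^ μ k j * ∏ q ∈ Finset.univ.erase k, x q ^ μ q j :=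
      (Finset.mul_prod_erase Finset.univ _ (Finset.mem_univ k)).symm
    rcases hn : μ k j with _ | n
    · simp [hn]
    · have hxk : x k ≠ 0 := ne_of_gt (hxpos k)
      have hpx1 : p k ^ (n + 1) * x k ^ (n + 1) = 1 := by
        rw [hx, ← mul_pow, mul_inv_cancel₀ (hppos k), one_pow]
      have h1 : κ j * (x k ^ (n + 1) * ∏ q ∈ Finset.univ.erase k, x q ^ μ q j)
          = α j := by rw [← hn, ← hsplit]; exact hv j
      have hkey : κ j * (∏ q ∈ Finset.univ.erase k, x q ^ μ q j)
          = α j * p k ^ (n + 1) := by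
        apply mul_right_cancel₀ (pow_ne_zero (n + 1) hxk)
        calc κ j * (∏ q ∈ Finset.univ.erase k, x q ^ μ q j) * x k ^ (n + 1)
            = κ j * (x k ^ (n + 1) * ∏ q ∈ Finset.univ.erase k, x q ^ μ q j) := by
              ring
          _ = α j := h1
          _ = α j * (p k ^ (n + 1) * x k ^ (n + 1)) := by rw [hpx1]; ring
          _ = α j * p k ^ (n + 1) * x k ^ (n + 1) := by ring
      have hpx : p k ^ (n + 1) * x k ^ n = p k := by
        rw [hx, pow_succ, mul_comm (p k ^ n) (p k), mul_assoc, ← mul_pow,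
          mul_inv_cancel₀ (hppos k), one_pow, mul_one]
      rw [Nat.add_sub_cancel]
      calc κ j * ((∏ q ∈ Finset.univ.erase k, x q ^ μ q j) *
            (((n + 1 : ℕ) : ℝ) * x k ^ n))
          = (κ j * (∏ q ∈ Finset.univ.erase k, x q ^ μ q j)) *
              ((n + 1 : ℕ) : ℝ) * x k ^ n := by ring
        _ = α j * p k ^ (n + 1) * ((n + 1 : ℕ) : ℝ) * x k ^ n := by rw [hkey]
        _ = α j * (((n + 1 : ℕ) : ℝ) * (p k ^ (n + 1) * x k ^ n)) := by ring
        _ = α j * (((n + 1 : ℕ) : ℝ) * p k) := by rw [hpx]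
  -- the Jacobian at (κ, x) equals J
  have hjac : jacF N μ κ x = J := by
    rw [jacF_eq]
    funext i k
    have hJik : J i k = ∑ j, N i j * (α j * ((μ k j : ℝ) * p k)) := by
      rw [hJ, Matrix.mul_diagonal, Matrix.mul_apply, Finset.sum_mul]
      apply Finset.sum_congr rfl
      intro j _
      rw [Matrix.mul_diagonal, Matrix.transpose_apply, h𝒳]
      ring
    rw [hJik]
    show (∑ j, (N i j * κ j) * ((∏ q ∈ Finset.univ.erase k, x q ^ μ q j) *
        ((μ k j : ℝ) * x k ^ (μ k j - 1)))) = _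
    apply Finset.sum_congr rfl
    intro j _
    rw [mul_assoc, hterm j k]
  -- columns of J lie in S
  have hcolJ : ∀ k, (fun i => jacF N μ κ x i k) ∈ S := by
    intro k
    have hJ2 : J = N * (Matrix.diagonal α * 𝒳ᵀ * Matrix.diagonal p) := by
      rw [hJ, Matrix.mul_assoc, Matrix.mul_assoc, Matrix.mul_assoc]
    have hcol : (fun i => jacF N μ κ x i k)
        = N.mulVec (fun j => (Matrix.diagonal α * 𝒳ᵀ * Matrix.diagonal p) j k) := by
      funext i
      rw [hjac, hJ2]
      simp [Matrix.mul_apply, Matrix.mulVec, dotProduct]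
    rw [hcol, hS]
    have hmv : N.mulVec (fun j => (Matrix.diagonal α * 𝒳ᵀ * Matrix.diagonal p) j k)
        = ∑ j, ((Matrix.diagonal α * 𝒳ᵀ * Matrix.diagonal p) j k) • Nᵀ j := by
      funext i
      simp [Matrix.mulVec, dotProduct, Finset.sum_apply, mul_comm]
    rw [hmv]
    exact Submodule.sum_mem _ fun j _ => Submodule.smul_mem _ _
      (Submodule.subset_span ⟨j, rfl⟩)
  refine ⟨κ, x, hκpos, hxpos, hsteady, ?_⟩
  intro hmap
  have hdet : pminorSum r (jacF N μ κ x) ≠ 0 := by rw [hjac]; exact hB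
  exact restrict_surjective_of_pminorSum_ne_zero _ S hr hcolJ hdet hmap
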